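/- arXiv:2212.07229 — 3 statements merged into one kernel-verified Lean document; each statement's English description precedes it below -/
import Mathlib

section
/- Suppose f(p,t), W(k,t) satisfy the coupled weak system (∂f/∂t, φ)_p = −∬ Lφ · Lf · W · B dk dp and (∂W/∂t, η)_k = ∬ η · (LE) · Lf · W · B dk dp for all test functions φ, η, where B(p,k) ≥ 0 is an arbitrary integrable kernel. If a pair (φ_c, η_c) satisfies η_c · LE − Lφ_c = 0 pointwise, then the total quantity (f, φ_c)_p + (W, η_c)_k is constant in time. -/
open MeasureTheory

/-- Unconditional conservation: if `f` and `W` satisfy the coupled weak system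
`(∂f/∂t, φ)_p = −∬ Lφ · Lf · W · B` and `(∂W/∂t, η)_k = ∬ η · (LE) · Lf · W · B`
for all test functions, with an arbitrary nonnegative integrable kernel `B`, and a pair
`(φ_c, η_c)` satisfies `η_c · LE − Lφ_c = 0` pointwise, then the total quantity
`(f, φ_c)_p + (W, η_c)_k` is constant in time. -/
theorem stmt4 {P K : Type*} [MeasureSpace P] [MeasureSpace K]
    (L : (P → ℝ) → P × K → ℝ)          -- the directional differential operator
    (E : P → ℝ)                        -- particle energy
    (f : ℝ → P → ℝ) (W : ℝ → K → ℝ)   -- particle pdf and wave sed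
    (B : P × K → ℝ) (hB : ∀ pk, 0 ≤ B pk) (hBint : Integrable B)
    (hf : ∀ (φ : P → ℝ) (t : ℝ), HasDerivAt (fun τ => ∫ p, f τ p * φ p)
      (-∫ pk : P × K, L φ pk * L (f t) pk * W t pk.2 * B pk) t)
    (hW : ∀ (η : K → ℝ) (t : ℝ), HasDerivAt (fun τ => ∫ k, W τ k * η k)
      (∫ pk : P × K, η pk.2 * L E pk * L (f t) pk * W t pk.2 * B pk) t)
    (φc : P → ℝ) (ηc : K → ℝ)
    (hcons : ∀ pk : P × K, ηc pk.2 * L E pk - L φc pk = 0) :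
    ∀ s t : ℝ, (∫ p, f s p * φc p) + (∫ k, W s k * ηc k)
      = (∫ p, f t p * φc p) + (∫ k, W t k * ηc k) := by
  have key : ∀ t : ℝ, HasDerivAt
      (fun τ => (∫ p, f τ p * φc p) + (∫ k, W τ k * ηc k)) 0 t := by
    intro t
    have h := (hf φc t).add (hW ηc t)
    have heq : (-∫ pk : P × K, L φc pk * L (f t) pk * W t pk.2 * B pk)
        + (∫ pk : P × K, ηc pk.2 * L E pk * L (f t) pk * W t pk.2 * B pk) = 0 := by
      have : (fun pk : P × K => ηc pk.2 * L E pk * L (f t) pk * W t pk.2 * B pk)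
          = (fun pk : P × K => L φc pk * L (f t) pk * W t pk.2 * B pk) := by
        funext pk
        have := hcons pk
        have h2 : ηc pk.2 * L E pk = L φc pk := by linarith
        rw [h2]
      rw [this]; ring
    rwa [heq] at h
  intro s t
  have hc := is_const_of_deriv_eq_zero (f := fun τ =>
      (∫ p, f τ p * φc p) + (∫ k, W τ k * ηc k))
    (fun x => (key x).differentiableAt) (fun x => (key x).deriv) s t
  exact hc
end

section
/- Discrete conservation of the semi-implicit scheme: if (f^{s+1} − f^s, φ)_p / Δt + B_L(f^{s+1}, W^s, φ) = 0 and (W^{s+1} − W^s, η)_k / Δt − H_L(W^s, f^{s+1}, η) = 0 for all test functions φ, η, where B_L(f,W,φ) = ∬ L_h φ · L_h f · W · B and H_L(W,f,η) = ∬ η · L_h E_h · L_h f · W · B, then for any pair (φ_c, η_c) with η_c · L_h E_h − L_h φ_c ≡ 0, one has (f^{s+1}, φ_c)_p + (W^{s+1}, η_c)_k = (f^s, φ_c)_p + (W^s, η_c)_k. -/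
open MeasureTheory

/-- Discrete conservation of the semi-implicit scheme: if
`(f^{s+1} − f^s, φ)_p/Δt + B_L(f^{s+1}, W^s, φ) = 0` and
`(W^{s+1} − W^s, η)_k/Δt − H_L(W^s, f^{s+1}, η) = 0` for all test functions,
then for any pair `(φ_c, η_c)` with `η_c · L_h E_h − L_h φ_c ≡ 0`,
`(f^{s+1}, φ_c)_p + (W^{s+1}, η_c)_k = (f^s, φ_c)_p + (W^s, η_c)_k`. -/
theorem stmt10 {P K : Type*} [MeasureSpace P] [MeasureSpace K]
    (Lh : (P → ℝ) → P × K → ℝ) (Eh : P → ℝ)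
    (f0 f1 : P → ℝ) (W0 W1 : K → ℝ) (B : P × K → ℝ)
    (hB : ∀ pk, 0 ≤ B pk)
    (Δt : ℝ) (hΔt : 0 < Δt)
    (hf : ∀ φ : P → ℝ,
      (∫ p, (f1 p - f0 p) * φ p) / Δt
        + ∫ pk : P × K, Lh φ pk * Lh f1 pk * W0 pk.2 * B pk = 0)
    (hW : ∀ η : K → ℝ,
      (∫ k, (W1 k - W0 k) * η k) / Δt
        - ∫ pk : P × K, η pk.2 * Lh Eh pk * Lh f1 pk * W0 pk.2 * B pk = 0)
    (φc : P → ℝ) (ηc : K → ℝ)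
    (hcons : ∀ pk : P × K, ηc pk.2 * Lh Eh pk - Lh φc pk = 0)
    (hint0 : Integrable (fun p => f0 p * φc p))
    (hint1 : Integrable (fun p => f1 p * φc p))
    (hintW0 : Integrable (fun k => W0 k * ηc k))
    (hintW1 : Integrable (fun k => W1 k * ηc k)) :
    (∫ p, f1 p * φc p) + (∫ k, W1 k * ηc k)
      = (∫ p, f0 p * φc p) + (∫ k, W0 k * ηc k) := by
  have hf' := hf φc
  have hW' := hW ηc
  have heq : (∫ pk : P × K, Lh φc pk * Lh f1 pk * W0 pk.2 * B pk)
      = ∫ pk : P × K, ηc pk.2 * Lh Eh pk * Lh f1 pk * W0 pk.2 * B pk := by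
    congr 1; funext pk
    have := hcons pk
    have h : Lh φc pk = ηc pk.2 * Lh Eh pk := by linarith
    rw [h]
  have hX : (∫ p, (f1 p - f0 p) * φc p)
      = (∫ p, f1 p * φc p) - ∫ p, f0 p * φc p := by
    simp_rw [sub_mul]
    exact integral_sub hint1 hint0
  have hY : (∫ k, (W1 k - W0 k) * ηc k)
      = (∫ k, W1 k * ηc k) - ∫ k, W0 k * ηc k := by
    simp_rw [sub_mul]
    exact integral_sub hintW1 hintW0
  rw [heq] at hf'
  have hsum : ((∫ p, (f1 p - f0 p) * φc p) + ∫ k, (W1 k - W0 k) * ηc k) / Δt = 0 := by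
    rw [add_div]; linarith
  have hzero := (div_eq_zero_iff.mp hsum).resolve_right hΔt.ne'
  rw [hX, hY] at hzero
  linarith
end

section
/- Fully discrete L² stability: under the semi-implicit scheme (f^{s+1} − f^s, φ)_p = −Δt · B_L(f^{s+1}, W^s, φ) with B_L(f, W, f) = ∬ (L_h f)² W B ≥ 0 whenever W ≥ 0, if W^s ≥ 0 pointwise for all s then ‖f^s‖_{L²} ≤ ‖f^0‖_{L²} for all s ≥ 0. -/
/-!
Testing the scheme with `φ = f^{s+1}` gives `(f^{s+1} - f^s, f^{s+1}) = -Δt B_L(f^{s+1}, W^s, f^{s+1}) ≤ 0`,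
i.e. `‖f^{s+1}‖² ≤ (f^s, f^{s+1}) ≤ ‖f^s‖ ‖f^{s+1}‖` by Cauchy–Schwarz in `L²`. Hence the `L²` norm
decreases at every step.
-/

open MeasureTheory

theorem norm_le_norm_of_inner_self_le {E : Type*} [NormedAddCommGroup E] [InnerProductSpace ℝ E]
    {x y : E} (h : inner ℝ y y ≤ inner ℝ x y) : ‖y‖ ≤ ‖x‖ := by
  have hsq : ‖y‖ * ‖y‖ ≤ ‖x‖ * ‖y‖ :=
    calc ‖y‖ * ‖y‖ = inner ℝ y y := (real_inner_self_eq_norm_mul_norm y).symm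
      _ ≤ inner ℝ x y := h
      _ ≤ ‖x‖ * ‖y‖ := real_inner_le_norm x y
  rcases (norm_nonneg y).eq_or_lt with hy | hy
  · rw [← hy]
    exact norm_nonneg x
  · exact le_of_mul_le_mul_right hsq hy

namespace MeasureTheory.MemLp

variable {α : Type*} {m : MeasurableSpace α} {μ : Measure α} {f g : α → ℝ}

theorem inner_toLp (hf : MemLp f 2 μ) (hg : MemLp g 2 μ) :
    inner ℝ (hf.toLp f) (hg.toLp g) = ∫ a, f a * g a ∂μ := by
  rw [L2.inner_def]
  refine integral_congr_ae ?_
  filter_upwards [hf.coeFn_toLp, hg.coeFn_toLp] with a hfa hga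
  simp [hfa, hga, mul_comm]

theorem eLpNorm_le_of_integral_sub_mul_nonpos (hf : MemLp f 2 μ) (hg : MemLp g 2 μ)
    (h : ∫ a, (g a - f a) * g a ∂μ ≤ 0) : eLpNorm g 2 μ ≤ eLpNorm f 2 μ := by
  have hsplit : ∫ a, (g a - f a) * g a ∂μ = ∫ a, g a * g a ∂μ - ∫ a, f a * g a ∂μ := by
    simp only [sub_mul]
    exact integral_sub (hg.integrable_mul hg) (hf.integrable_mul hg)
  have hinner : inner ℝ (hg.toLp g) (hg.toLp g) ≤ inner ℝ (hf.toLp f) (hg.toLp g) := by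
    rw [hg.inner_toLp hg, hf.inner_toLp hg, ← sub_nonpos, ← hsplit]
    exact h
  have hnorm := norm_le_norm_of_inner_self_le hinner
  rwa [Lp.norm_toLp, Lp.norm_toLp,
    ENNReal.toReal_le_toReal hg.eLpNorm_ne_top hf.eLpNorm_ne_top] at hnorm

end MeasureTheory.MemLp

theorem stmt11_general {P K : Type*} [MeasureSpace P] [MeasureSpace K]
    (Lh : (P → ℝ) → P × K → ℝ)
    (V : Submodule ℝ (P → ℝ))
    (f : ℕ → P → ℝ) (W : ℕ → K → ℝ) (B : P × K → ℝ)
    (Δt : ℝ) (hΔt : 0 < Δt)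
    (hfV : ∀ s, f s ∈ V)
    (hfL2 : ∀ s, MemLp (f s) 2 volume)
    (hW : ∀ s k, 0 ≤ W s k) (hB : ∀ pk, 0 ≤ B pk)
    (hscheme : ∀ (s : ℕ), ∀ φ ∈ V,
      (∫ p, (f (s+1) p - f s p) * φ p)
        = -Δt * ∫ pk : P × K, Lh φ pk * Lh (f (s+1)) pk * W s pk.2 * B pk) :
    ∀ s : ℕ, eLpNorm (f s) 2 volume ≤ eLpNorm (f 0) 2 volume := by
  have energy_step : ∀ s, ∫ p, (f (s+1) p - f s p) * f (s+1) p ≤ 0 := by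
    intro s
    have hBL_nonneg : 0 ≤ ∫ pk : P × K, Lh (f (s+1)) pk * Lh (f (s+1)) pk * W s pk.2 * B pk :=
      integral_nonneg fun pk => mul_nonneg (mul_nonneg (mul_self_nonneg _) (hW s pk.2)) (hB pk)
    rw [hscheme s _ (hfV (s+1)), neg_mul, neg_nonpos]
    exact mul_nonneg hΔt.le hBL_nonneg
  have hanti : Antitone fun s => eLpNorm (f s) 2 volume :=
    antitone_nat_of_succ_le fun s =>
      (hfL2 s).eLpNorm_le_of_integral_sub_mul_nonpos (hfL2 (s+1)) (energy_step s)
  exact fun s => hanti (Nat.zero_le s)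

/-- Fully discrete L² stability of the semi-implicit scheme: if
`(f^{s+1} − f^s, φ)_p = −Δt · B_L(f^{s+1}, W^s, φ)` for all test functions `φ` in
the finite element space, and `W^s ≥ 0` pointwise for all `s` with `B ≥ 0`, then
`‖f^s‖_{L²} ≤ ‖f^0‖_{L²}` for all `s ≥ 0`. -/
theorem stmt11 {P K : Type*} [MeasureSpace P] [MeasureSpace K]
    (Lh : (P → ℝ) → P × K → ℝ)
    (V : Submodule ℝ (P → ℝ)) (hV : FiniteDimensional ℝ V)
    (f : ℕ → P → ℝ) (W : ℕ → K → ℝ) (B : P × K → ℝ)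
    (Δt : ℝ) (hΔt : 0 < Δt)
    (hfV : ∀ s, f s ∈ V)
    (hfL2 : ∀ s, MemLp (f s) 2 volume)
    (hW : ∀ s k, 0 ≤ W s k) (hB : ∀ pk, 0 ≤ B pk)
    (hscheme : ∀ (s : ℕ), ∀ φ ∈ V,
      (∫ p, (f (s+1) p - f s p) * φ p)
        = -Δt * ∫ pk : P × K, Lh φ pk * Lh (f (s+1)) pk * W s pk.2 * B pk)
    (hBL : ∀ s, Integrable
      (fun pk : P × K => Lh (f (s+1)) pk * Lh (f (s+1)) pk * W s pk.2 * B pk)) :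
    ∀ s : ℕ, eLpNorm (f s) 2 volume ≤ eLpNorm (f 0) 2 volume :=
  stmt11_general Lh V f W B Δt hΔt hfV hfL2 hW hB hscheme
end
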